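/- Let 2 ∈ R*, n ≥ 3m, and H a subgroup of GL_N(R) containing Λ^m E_n(R). If |I ∩ J| = |K ∩ L| for distinct pairs (I,J), (K,L) of m-element subsets, then the sets A_{I,J} = {ξ : t_{I,J}(ξ) ∈ H} and A_{K,L} coincide. -/

import Mathlib

open Matrix

/-- Index type: `m`-element subsets of `{1,…,n}`. -/
abbrev ExtIdx (n m : ℕ) := {s : Finset (Fin n) // s.card = m}

/-- The `m`-th exterior power of a matrix: the matrix of its `m × m` minors,
rows and columns indexed by `m`-element subsets in increasing order. -/
def extPow (R : Type) [CommRing R] (n m : ℕ) (g : Matrix (Fin n) (Fin n) R) :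
    Matrix (ExtIdx n m) (ExtIdx n m) R :=
  Matrix.of fun I J =>
    (Matrix.of fun a b : Fin m =>
      g (I.1.orderIsoOfFin I.2 a) (J.1.orderIsoOfFin J.2 b)).det

/-- An elementary transvection `e + ξ e_{i,j}` as an element of `GL`. -/
def tGL (R : Type) [CommRing R] {ι : Type} [Fintype ι] [DecidableEq ι]
    (i j : ι) (hij : i ≠ j) (ξ : R) : GL ι R where
  val := Matrix.transvection i j ξ
  inv := Matrix.transvection i j (-ξ)
  val_inv := by
    rw [Matrix.transvection_mul_transvection_same i j hij]; simp
  inv_val := by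
    rw [Matrix.transvection_mul_transvection_same i j hij]; simp

/-- The elementary group `E(R)` generated by all elementary transvections. -/
def elemGL (R : Type) [CommRing R] (ι : Type) [Fintype ι] [DecidableEq ι] :
    Subgroup (GL ι R) :=
  Subgroup.closure {x | ∃ i j, ∃ hij : i ≠ j, ∃ ξ : R, x = tGL R i j hij ξ}

/-- `E(A)`: the subgroup generated by elementary transvections with parameter in `A`. -/
def elemGLIdeal (R : Type) [CommRing R] (ι : Type) [Fintype ι] [DecidableEq ι]
    (A : Ideal R) : Subgroup (GL ι R) :=
  Subgroup.closure {x | ∃ i j, ∃ hij : i ≠ j, ∃ ξ : R, ξ ∈ A ∧ x = tGL R i j hij ξ}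

/-- The smallest subgroup containing `K` and normalized by `H`:
the normal closure of `K` under conjugation by `H`. -/
def conjClosureBy {G : Type*} [Group G] (K H : Subgroup G) : Subgroup G :=
  Subgroup.closure {x | ∃ h ∈ H, ∃ y ∈ K, x = h * y * h⁻¹}

/-- The relative elementary subgroup `E(R, A) = E(A)^{E(R)}`. -/
def relElem (R : Type) [CommRing R] (ι : Type) [Fintype ι] [DecidableEq ι]
    (A : Ideal R) : Subgroup (GL ι R) :=
  conjClosureBy (elemGLIdeal R ι A) (elemGL R ι)

/-- `Λ^m E_n(R)`: the exterior power of the elementary group, the subgroup of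
`GL_N(R)` generated by the exterior powers of elementary transvections. -/
def extElem (R : Type) [CommRing R] (n m : ℕ) : Subgroup (GL (ExtIdx n m) R) :=
  Subgroup.closure {x | ∃ i j, ∃ _ : i ≠ j, ∃ ξ : R,
    (x : Matrix (ExtIdx n m) (ExtIdx n m) R) = extPow R n m (Matrix.transvection i j ξ)}

/-- `sign(L, i)`: the sign of the permutation sorting the list `(L, i)`. -/
def signLI (R : Type) [CommRing R] {n : ℕ} (L : Finset (Fin n)) (i : Fin n) : R :=
  (-1 : R) ^ (L.filter fun l => i < l).card

/-- Replacing the element `i ∈ I` by `j ∉ I` in an `m`-element subset. -/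
def swapIdx {n m : ℕ} (I : ExtIdx n m) (i j : Fin n) (hi : i ∈ I.1) (hj : j ∉ I.1) :
    ExtIdx n m :=
  ⟨insert j (I.1.erase i), by
    have h1 : j ∉ I.1.erase i := fun h => hj (Finset.mem_of_mem_erase h)
    have h2 : 1 ≤ m := I.2 ▸ Finset.card_pos.mpr ⟨i, hi⟩
    rw [Finset.card_insert_of_notMem h1, Finset.card_erase_of_mem hi, I.2]
    omega⟩

/-- Reduction of `GL` along a ring homomorphism. -/
def glMap {ι : Type} [Fintype ι] [DecidableEq ι] {S S' : Type} [CommRing S] [CommRing S']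
    (f : S →+* S') : GL ι S →* GL ι S' :=
  Units.map (RingHom.mapMatrix f).toMonoidHom


/-!
For a permutation `σ` of `{1,…,n}`, the Weyl elements `t_{xy}(1) t_{yx}(-1) t_{xy}(1)` of
`E_n(R)` multiply to a signed permutation matrix `w_σ`. Its exterior power `Λ^m w_σ` lies in
`Λ^m E_n(R) ≤ H` and is again a signed permutation matrix, now permuting `m`-subsets by `σ`, so
conjugation by it carries `t_{I,J}(ξ)` to `t_{σI,σJ}(±ξ)`; hence `A_{I,J} = A_{σI,σJ}`. Finally
two pairs `(I,J)`, `(K,L)` with `|I ∩ J| = |K ∩ L|` are related by some `σ`.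
-/

section Combinatorics

open Finset

theorem Finset.card_filter_mem_and_mem {α : Type*} [Fintype α] [DecidableEq α] (A B : Finset α) :
    #{x | x ∈ A ∧ x ∈ B} = #(A ∩ B) ∧ #{x | x ∈ A ∧ x ∉ B} + #(A ∩ B) = #A ∧
      #{x | x ∉ A ∧ x ∈ B} + #(A ∩ B) = #B ∧
      #{x | x ∉ A ∧ x ∉ B} + #A + #B = Fintype.card α + #(A ∩ B) := by
  have hAB : ({x | x ∈ A ∧ x ∉ B} : Finset α) = A \ B := by ext; simp
  have hBA : ({x | x ∉ A ∧ x ∈ B} : Finset α) = B \ A := by ext; simp [and_comm]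
  have hc : ({x | x ∉ A ∧ x ∉ B} : Finset α) = (A ∪ B)ᶜ := by ext; simp
  refine ⟨by congr 1; ext; simp, by rw [hAB, card_sdiff_add_card_inter], ?_, ?_⟩
  · rw [hBA, inter_comm, card_sdiff_add_card_inter]
  · have := card_union_add_card_inter A B
    have := card_compl_add_card (A ∪ B)
    rw [hc]
    omega

/-- The four Venn regions of `(I, J)` and of `(K, L)` have matching sizes, so bijections between
corresponding regions glue to a permutation. -/
theorem Equiv.Perm.exists_map_eq_map_eq {α : Type*} [Fintype α] [DecidableEq α]
    {I J K L : Finset α} (hIK : #I = #K) (hJL : #J = #L) (hIJ : #(I ∩ J) = #(K ∩ L)) :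
    ∃ σ : Equiv.Perm α, I.map σ.toEmbedding = K ∧ J.map σ.toEmbedding = L := by
  let p : α → Bool × Bool := fun a => (decide (a ∈ I), decide (a ∈ J))
  let q : α → Bool × Bool := fun a => (decide (a ∈ K), decide (a ∈ L))
  have hcard : ∀ c, Fintype.card {a // p a = c} = Fintype.card {a // q a = c} := by
    obtain ⟨h₁, h₂, h₃, h₄⟩ := card_filter_mem_and_mem I J
    obtain ⟨h₁', h₂', h₃', h₄'⟩ := card_filter_mem_and_mem K L
    rintro ⟨_ | _, _ | _⟩ <;> simp [p, q, Fintype.card_subtype] <;> omega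
  let σ := Equiv.ofFiberEquiv fun c => Fintype.equivOfCardEq (hcard c)
  have hσ : ∀ a, q (σ a) = p a := Equiv.ofFiberEquiv_map _
  refine ⟨σ, ?_, ?_⟩ <;> ext b <;> obtain ⟨a, rfl⟩ := σ.surjective b
  · simpa [p, q] using (congrArg Prod.fst (hσ a)).symm
  · simpa [p, q] using (congrArg Prod.snd (hσ a)).symm

end Combinatorics

namespace Matrix

variable {ι : Type*} [DecidableEq ι] {R : Type*} [CommRing R]

/-- Signs are kept in `ℤˣ` so that they are `±1` in every ring. -/
def signedPerm (R : Type*) [CommRing R] (σ : Equiv.Perm ι) (d : ι → ℤˣ) : Matrix ι ι R :=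
  of fun i j => if i = σ j then ((d j : ℤ) : R) else 0

theorem signedPerm_apply (σ : Equiv.Perm ι) (d : ι → ℤˣ) (i j : ι) :
    signedPerm R σ d i j = if i = σ j then ((d j : ℤ) : R) else 0 := rfl

theorem signedPerm_one : signedPerm R (1 : Equiv.Perm ι) 1 = 1 := by
  ext i j
  simp [signedPerm_apply, one_apply]

variable [Fintype ι]

theorem signedPerm_mul_signedPerm (σ τ : Equiv.Perm ι) (d e : ι → ℤˣ) :
    signedPerm R σ d * signedPerm R τ e = signedPerm R (σ * τ) fun j => d (τ j) * e j := by
  ext i j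
  rw [mul_apply, Finset.sum_eq_single (τ j)]
  · simp [signedPerm_apply]
  · intro k _ hk
    simp [signedPerm_apply, hk]
  · simp

theorem toLin'_signedPerm_single (σ : Equiv.Perm ι) (d : ι → ℤˣ) (j : ι) :
    toLin' (signedPerm R σ d) (Pi.single j 1) = ((d j : ℤ) : R) • Pi.single (σ j) 1 := by
  ext i
  simp [signedPerm_apply, Pi.single_apply]

theorem signedPerm_mul_transvection (σ : Equiv.Perm ι) (d : ι → ℤˣ) (i j : ι) (ξ : R) :
    signedPerm R σ d * transvection i j ξ =
      transvection (σ i) (σ j) (((d i * d j : ℤˣ) : ℤ) * ξ) * signedPerm R σ d := by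
  simp only [transvection, mul_add, add_mul, mul_one, one_mul, add_right_inj]
  have hd : ((d j : ℤ) : R) * ((d j : ℤ) : R) = 1 := by
    rw [← Int.cast_mul, ← Units.val_mul, Int.units_mul_self, Units.val_one, Int.cast_one]
  ext a b
  by_cases hb : b = j
  · by_cases ha : a = σ i
    · simp only [hb, ha, mul_single_apply_same, single_mul_apply_same, signedPerm_apply, if_true,
        Units.val_mul, Int.cast_mul]
      linear_combination (-((d i : ℤ) : R) * ξ) * hd
    · simp [hb, ha, signedPerm_apply]
  · by_cases ha : a = σ i
    · simp [ha, hb, Ne.symm hb, signedPerm_apply]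
    · simp [ha, hb]

theorem transvection_mul_transvection_mul_transvection {x y : ι} (hxy : x ≠ y) :
    transvection x y (1 : R) * transvection y x (-1) * transvection x y 1 =
      signedPerm R (Equiv.swap x y) fun j => if j = x then -1 else 1 := by
  simp only [transvection, mul_add, add_mul, mul_one, one_mul, single_mul_single_same,
    single_mul_single_of_ne (1 : R) x y x hxy.symm (1 : R)]
  ext i j
  simp only [add_apply, one_apply, single, of_apply, signedPerm_apply, Equiv.swap_apply_def]
  have hxy' : ∀ k, k = x ∨ k = y ∨ (k ≠ x ∧ k ≠ y) := by tauto
  rcases hxy' i with rfl | rfl | ⟨hix, hiy⟩ <;> rcases hxy' j with rfl | rfl | ⟨hjx, hjy⟩ <;>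
    simp [hxy.symm, Ne.symm, *]

theorem toMatrix_eq_signedPerm {M : Type*} [AddCommGroup M] [Module R M] (b : Module.Basis ι R M)
    {f : M →ₗ[R] M} {σ : Equiv.Perm ι} {d : ι → ℤˣ}
    (hf : ∀ j, f (b j) = ((d j : ℤ) : R) • b (σ j)) :
    LinearMap.toMatrix b b f = signedPerm R σ d := by
  ext i j
  simp [LinearMap.toMatrix_apply, hf, signedPerm_apply, Finsupp.single_apply, eq_comm]

end Matrix

section Transvections

variable {R : Type} [CommRing R] {ι : Type} [Fintype ι] [DecidableEq ι]

theorem tGL_inv (i j : ι) (hij : i ≠ j) (ξ : R) : (tGL R i j hij ξ)⁻¹ = tGL R i j hij (-ξ) :=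
  Units.ext rfl

theorem tGL_units_mul_mem_iff (H : Subgroup (GL ι R)) (i j : ι) (hij : i ≠ j) (u : ℤˣ) (ξ : R) :
    tGL R i j hij ((u : ℤ) * ξ) ∈ H ↔ tGL R i j hij ξ ∈ H := by
  rcases Int.units_eq_one_or u with rfl | rfl
  · simp
  · simp [← tGL_inv, H.inv_mem_iff]

theorem conj_tGL_of_val_eq_signedPerm {W : GL ι R} {σ : Equiv.Perm ι} {d : ι → ℤˣ}
    (hW : (W : Matrix ι ι R) = Matrix.signedPerm R σ d) (i j : ι) (hij : i ≠ j) (ξ : R) :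
    W * tGL R i j hij ξ * W⁻¹ =
      tGL R (σ i) (σ j) (σ.injective.ne hij) (((d i * d j : ℤˣ) : ℤ) * ξ) := by
  rw [mul_inv_eq_iff_eq_mul]
  ext : 1
  simp only [Units.val_mul, hW]
  exact Matrix.signedPerm_mul_transvection σ d i j ξ

theorem exists_val_eq_signedPerm_mem_elemGL (σ : Equiv.Perm ι) :
    ∃ d : ι → ℤˣ, ∃ W ∈ elemGL R ι, (W : Matrix ι ι R) = Matrix.signedPerm R σ d := by
  induction σ using Equiv.Perm.swap_induction_on with
  | one => exact ⟨1, 1, one_mem _, Matrix.signedPerm_one.symm⟩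
  | swap_mul f x y hxy ih =>
    obtain ⟨d, W, hW, hWd⟩ := ih
    have hgen : ∀ (i j : ι) (hij : i ≠ j) (ξ : R), tGL R i j hij ξ ∈ elemGL R ι :=
      fun i j hij ξ => Subgroup.subset_closure ⟨i, j, hij, ξ, rfl⟩
    refine ⟨fun j => (if f j = x then -1 else 1) * d j,
      tGL R x y hxy 1 * tGL R y x hxy.symm (-1) * tGL R x y hxy 1 * W,
      mul_mem (mul_mem (mul_mem (hgen _ _ _ _) (hgen _ _ _ _)) (hgen _ _ _ _)) hW, ?_⟩
    simp only [Units.val_mul, hWd]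
    exact (congrArg (· * _) (Matrix.transvection_mul_transvection_mul_transvection hxy)).trans
      (Matrix.signedPerm_mul_signedPerm _ _ _ _)

end Transvections

section ExteriorPower

variable {R : Type} [CommRing R] {n m : ℕ}

noncomputable def extBasis (R : Type) [CommRing R] (n m : ℕ) :
    Module.Basis (ExtIdx n m) R (⋀[R]^m (Fin n → R)) :=
  (Pi.basisFun R (Fin n)).exteriorPower m

theorem extBasis_apply (T : ExtIdx n m) :
    extBasis R n m T =
      exteriorPower.ιMulti R m fun k => Pi.single (T.1.orderEmbOfFin T.2 k) (1 : R) :=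
  (exteriorPower.basis_apply R m (Pi.basisFun R (Fin n)) T).trans (by
    simp only [exteriorPower.ιMulti_family, Function.comp_def, Pi.basisFun_apply]; rfl)

theorem extPow_eq_toMatrix (g : Matrix (Fin n) (Fin n) R) :
    extPow R n m g = LinearMap.toMatrix (extBasis R n m) (extBasis R n m)
      (exteriorPower.map m (Matrix.toLin' g)) := by
  ext S T
  have hentry : ∀ S T : Set.powersetCard (Fin n) m,
      ((Pi.basisFun R (Fin n)).exteriorPower m).repr
        (exteriorPower.map m (Matrix.toLin' g) ((Pi.basisFun R (Fin n)).exteriorPower m T)) S =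
      (Matrix.of fun a b : Fin m => g (S.1.orderIsoOfFin S.2 a) (T.1.orderIsoOfFin T.2 b)).det := by
    intro S T
    rw [exteriorPower.basis_repr_apply, exteriorPower.basis_apply,
      exteriorPower.map_apply_ιMulti_family, exteriorPower.ιMulti_family,
      exteriorPower.ιMultiDual_apply_ιMulti, ← Matrix.det_transpose]
    congr 1
    ext a b
    simp [Set.powersetCard.ofFinEmbEquiv_symm_apply]
    rfl
  rw [LinearMap.toMatrix_apply]
  exact (hentry S T).symm

/-- Cauchy–Binet, obtained from the functoriality of `⋀ᵐ`. -/
theorem extPow_mul (g h : Matrix (Fin n) (Fin n) R) :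
    extPow R n m (g * h) = extPow R n m g * extPow R n m h := by
  simp only [extPow_eq_toMatrix, Matrix.toLin'_mul, exteriorPower.map_comp,
    LinearMap.toMatrix_comp _ (extBasis R n m)]

theorem extPow_one : extPow R n m (1 : Matrix (Fin n) (Fin n) R) = 1 := by
  rw [extPow_eq_toMatrix, Matrix.toLin'_one, exteriorPower.map_id, LinearMap.toMatrix_id]

def extPowHom : GL (Fin n) R →* GL (ExtIdx n m) R :=
  Units.map
    { toFun := extPow R n m
      map_one' := extPow_one
      map_mul' := extPow_mul }

theorem coe_extPowHom (g : GL (Fin n) R) :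
    ((extPowHom g : GL (ExtIdx n m) R) : Matrix (ExtIdx n m) (ExtIdx n m) R) = extPow R n m g :=
  rfl

theorem extPowHom_mem_extElem {g : GL (Fin n) R} (hg : g ∈ elemGL R (Fin n)) :
    (extPowHom g : GL (ExtIdx n m) R) ∈ extElem R n m := by
  suffices (elemGL R (Fin n)).map extPowHom ≤ extElem R n m from this ⟨g, hg, rfl⟩
  rw [elemGL, MonoidHom.map_closure]
  apply Subgroup.closure_mono
  rintro _ ⟨_, ⟨i, j, hij, ξ, rfl⟩, rfl⟩
  exact ⟨i, j, hij, ξ, rfl⟩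

def extIdxPerm (σ : Equiv.Perm (Fin n)) : Equiv.Perm (ExtIdx n m) :=
  σ.finsetCongr.subtypeEquiv fun s => by simp

theorem coe_extIdxPerm (σ : Equiv.Perm (Fin n)) (T : ExtIdx n m) :
    (extIdxPerm σ T).1 = T.1.map σ.toEmbedding := rfl

theorem exists_perm_orderEmbOfFin_extIdxPerm (σ : Equiv.Perm (Fin n)) (T : ExtIdx n m) :
    ∃ π : Equiv.Perm (Fin m), ∀ k, σ (T.1.orderEmbOfFin T.2 k) =
      (extIdxPerm σ T).1.orderEmbOfFin (extIdxPerm σ T).2 (π k) := by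
  set S := extIdxPerm σ T
  have hmem : ∀ k, σ (T.1.orderEmbOfFin T.2 k) ∈ S.1 := fun k => by
    simp [S, coe_extIdxPerm, Finset.orderEmbOfFin_mem]
  let f : Fin m → Fin m := fun k => (S.1.orderIsoOfFin S.2).symm ⟨_, hmem k⟩
  have hf : ∀ k, S.1.orderEmbOfFin S.2 (f k) = σ (T.1.orderEmbOfFin T.2 k) := fun k => by
    simp [f, ← Finset.coe_orderIsoOfFin_apply]
  have hinj : Function.Injective f := fun k l hkl =>
    (T.1.orderEmbOfFin T.2).injective (σ.injective (by rw [← hf, ← hf, hkl]))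
  exact ⟨Equiv.ofBijective f (Finite.injective_iff_bijective.mp hinj), fun k => (hf k).symm⟩

/-- The sign collects the signs `d` on `T` and the sign of the permutation `π` that sorts
`σ(T)` increasingly. -/
theorem exteriorPower_map_signedPerm_extBasis (σ : Equiv.Perm (Fin n)) (d : Fin n → ℤˣ)
    (T : ExtIdx n m) :
    ∃ u : ℤˣ, exteriorPower.map m (Matrix.toLin' (Matrix.signedPerm R σ d)) (extBasis R n m T) =
      ((u : ℤ) : R) • extBasis R n m (extIdxPerm σ T) := by
  obtain ⟨π, hπ⟩ := exists_perm_orderEmbOfFin_extIdxPerm σ T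
  refine ⟨(∏ k, d (T.1.orderEmbOfFin T.2 k)) * Equiv.Perm.sign π, ?_⟩
  rw [extBasis_apply, extBasis_apply, exteriorPower.map_apply_ιMulti]
  simp only [Function.comp_def, Matrix.toLin'_signedPerm_single, hπ]
  rw [AlternatingMap.map_smul_univ]
  have hperm := (exteriorPower.ιMulti R m).map_perm
    (fun k => Pi.single ((extIdxPerm σ T).1.orderEmbOfFin (extIdxPerm σ T).2 k) 1 :
      Fin m → Fin n → R) π
  simp only [Function.comp_def] at hperm
  rw [hperm, Units.smul_def, ← Int.cast_smul_eq_zsmul R, smul_smul]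
  push_cast
  rfl

theorem exists_extPow_signedPerm (σ : Equiv.Perm (Fin n)) (d : Fin n → ℤˣ) :
    ∃ c : ExtIdx n m → ℤˣ,
      extPow R n m (Matrix.signedPerm R σ d) = Matrix.signedPerm R (extIdxPerm σ) c := by
  choose c hc using exteriorPower_map_signedPerm_extBasis (R := R) (m := m) σ d
  exact ⟨c, by rw [extPow_eq_toMatrix, Matrix.toMatrix_eq_signedPerm _ hc]⟩

end ExteriorPower

theorem tGL_extIdxPerm_mem_iff {R : Type} [CommRing R] {n m : ℕ}
    {H : Subgroup (GL (ExtIdx n m) R)} (hH : extElem R n m ≤ H) (σ : Equiv.Perm (Fin n))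
    (I J : ExtIdx n m) (hIJ : I ≠ J) (ξ : R) :
    tGL R (extIdxPerm σ I) (extIdxPerm σ J) ((extIdxPerm σ).injective.ne hIJ) ξ ∈ H ↔
      tGL R I J hIJ ξ ∈ H := by
  obtain ⟨d, W, hW, hWd⟩ := exists_val_eq_signedPerm_mem_elemGL (R := R) σ
  obtain ⟨c, hc⟩ := exists_extPow_signedPerm (R := R) (m := m) σ d
  have hWH : extPowHom W ∈ H := hH (extPowHom_mem_extElem hW)
  have hWc : ((extPowHom W : GL (ExtIdx n m) R) : Matrix (ExtIdx n m) (ExtIdx n m) R) =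
      Matrix.signedPerm R (extIdxPerm σ) c := by
    rw [coe_extPowHom, hWd, hc]
  have hconj := conj_tGL_of_val_eq_signedPerm hWc I J hIJ ξ
  rw [← tGL_units_mul_mem_iff H _ _ _ (c I * c J), ← hconj,
    H.mul_mem_cancel_right (H.inv_mem hWH), H.mul_mem_cancel_left hWH]

theorem levelSets_coincide_general (R : Type) [CommRing R] (n m : ℕ)
    (H : Subgroup (GL (ExtIdx n m) R)) (hH : extElem R n m ≤ H)
    (I J K L : ExtIdx n m) (hIJ : I ≠ J) (hKL : K ≠ L)
    (hcard : (I.1 ∩ J.1).card = (K.1 ∩ L.1).card) :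
    ∀ ξ : R, tGL R I J hIJ ξ ∈ H ↔ tGL R K L hKL ξ ∈ H := by
  intro ξ
  obtain ⟨σ, hσI, hσJ⟩ :=
    Equiv.Perm.exists_map_eq_map_eq (by rw [I.2, K.2]) (by rw [J.2, L.2]) hcard
  obtain rfl : K = extIdxPerm σ I := Subtype.ext hσI.symm
  obtain rfl : L = extIdxPerm σ J := Subtype.ext hσJ.symm
  exact (tGL_extIdxPerm_mem_iff hH σ I J hIJ ξ).symm

/-- If `2 ∈ R*`, `n ≥ 3m` and `H ≥ Λ^m E_n(R)`, then the sets
`A_{I,J} = {ξ : t_{I,J}(ξ) ∈ H}` coincide for pairs with equal intersection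
cardinality `|I ∩ J| = |K ∩ L|`. -/
theorem levelSets_coincide (R : Type) [CommRing R] (h2 : IsUnit (2 : R)) (n m : ℕ)
    (hm1 : 1 ≤ m) (hnm : 3 * m ≤ n)
    (H : Subgroup (GL (ExtIdx n m) R)) (hH : extElem R n m ≤ H)
    (I J K L : ExtIdx n m) (hIJ : I ≠ J) (hKL : K ≠ L)
    (hcard : (I.1 ∩ J.1).card = (K.1 ∩ L.1).card) :
    ∀ ξ : R, tGL R I J hIJ ξ ∈ H ↔ tGL R K L hKL ξ ∈ H :=
  levelSets_coincide_general R n m H hH I J K L hIJ hKL hcard
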